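/- Let V = E₀ ⊕ ⋯ ⊕ E_s be a direct-sum decomposition of V into nonzero subspaces with s ≥ 1 and dim E₀ = 1, let κ = κ(E₀,…,E_s), let u₀ ∈ E₀ be a unit vector, and let 1 ≤ j ≤ s. Then |P_{(Vʲ)^⊥} u₀| ≥ κ/2, where Vʲ = E_{j+1} ⊕ ⋯ ⊕ E_s and P_{(Vʲ)^⊥} is the orthogonal projection onto (Vʲ)^⊥ (for j = s this is the identity). -/

import Mathlib

/-!
The vectors `u₀ ∈ E₀` and `y = P_{Vʲ} u₀ ∈ E_{j+1} ⊕ ⋯ ⊕ E_s` lie in sums over disjoint index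
sets, so `κ ≤ d(ū₀, ȳ)`, and for a unit vector `d(ū₀, ȳ) = |u₀ - y| = |P_{(Vʲ)^⊥} u₀|`.
-/

open scoped RealInnerProductSpace
open Filter

variable {V : Type*} [NormedAddCommGroup V] [InnerProductSpace ℝ V]

/-- The projective distance between the lines spanned by two nonzero vectors:
`d(x̄, ȳ) = (1 − ⟨x,y⟫²/(|x|²|y|²))^{1/2}`. -/
noncomputable def projDist (x y : V) : ℝ :=
  Real.sqrt (1 - ⟪x, y⟫ ^ 2 / (‖x‖ ^ 2 * ‖y‖ ^ 2))

/-- The distance `d(x̄, P(W))` from the line spanned by `x` to the projective space of the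
submodule `W`. -/
noncomputable def projDistToSub (x : V) (W : Submodule ℝ V) : ℝ :=
  sInf {r : ℝ | ∃ y : V, y ∈ W ∧ y ≠ 0 ∧ r = projDist x y}

/-- `κ(E₀,…,E_s)`: the minimal projective distance between nonzero vectors lying in sums of
disjoint subfamilies of the `E i`. -/
noncomputable def kappa {ι : Type*} (E : ι → Submodule ℝ V) : ℝ :=
  sInf {r : ℝ | ∃ (I J : Finset ι) (x y : V), I.Nonempty ∧ J.Nonempty ∧ Disjoint I J ∧
    x ∈ (⨆ i ∈ I, E i) ∧ x ≠ 0 ∧ y ∈ (⨆ j ∈ J, E j) ∧ y ≠ 0 ∧ r = projDist x y}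

/-- `Vⁱ = E_{i+1} ⊕ ⋯ ⊕ E_s`. -/
noncomputable def Vlow {s : ℕ} (E : Fin (s+1) → Submodule ℝ V) (i : ℕ) : Submodule ℝ V :=
  ⨆ j : Fin (s+1), ⨆ _ : i < (j : ℕ), E j

/-- `Wⁱ = E₀ ⊕ ⋯ ⊕ E_i`. -/
noncomputable def Whigh {s : ℕ} (E : Fin (s+1) → Submodule ℝ V) (i : ℕ) : Submodule ℝ V :=
  ⨆ j : Fin (s+1), ⨆ _ : (j : ℕ) ≤ i, E j

/-- `‖x ∧ y‖ = (|x|²|y|² − ⟨x,y⟫²)^{1/2}`, the area of the parallelogram spanned by `x, y`. -/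
noncomputable def wedgeNorm (x y : V) : ℝ :=
  Real.sqrt (‖x‖ ^ 2 * ‖y‖ ^ 2 - ⟪x, y⟫ ^ 2)

lemma projDist_nonneg (x y : V) : 0 ≤ projDist x y := Real.sqrt_nonneg _

lemma projDist_le_one (x y : V) : projDist x y ≤ 1 :=
  Real.sqrt_le_one.mpr (sub_le_self _ (by positivity))

-- Since `0 / 0 = 0`, the junk line spanned by `0` sits at distance `1`, as if orthogonal to `x`.
lemma projDist_zero_right (x : V) : projDist x 0 = 1 := by simp [projDist]

lemma projDist_starProjection (K : Submodule ℝ V) [K.HasOrthogonalProjection] {u : V}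
    (hu : ‖u‖ = 1) : projDist u (K.starProjection u) = ‖Kᗮ.starProjection u‖ := by
  have hinner : ⟪u, K.starProjection u⟫ = ‖K.starProjection u‖ ^ 2 := by
    simpa [real_inner_comm] using K.re_inner_starProjection_eq_normSq u
  have hpyth := K.norm_sq_eq_add_norm_sq_starProjection u
  rw [hu] at hpyth
  rcases eq_or_ne (K.starProjection u) 0 with h0 | h0
  · rw [h0, projDist_zero_right]
    simp_all
  · rw [projDist, hinner, hu, ← Real.sqrt_sq (norm_nonneg (Kᗮ.starProjection u))]
    congr 1
    field_simp
    linarith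

section kappa

variable {ι : Type*} (E : ι → Submodule ℝ V)

lemma kappa_nonneg : 0 ≤ kappa E :=
  Real.sInf_nonneg <| by
    rintro _ ⟨I, J, x, y, -, -, -, -, -, -, -, rfl⟩
    exact projDist_nonneg x y

lemma kappa_le_one : kappa E ≤ 1 := by
  refine (Real.sInf_le_sSup _ ⟨0, ?_⟩ ⟨1, ?_⟩).trans (Real.sSup_le ?_ zero_le_one) <;>
    rintro _ ⟨I, J, x, y, -, -, -, -, -, -, -, rfl⟩
  exacts [projDist_nonneg x y, projDist_le_one x y, projDist_le_one x y]

variable {E} in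
lemma kappa_le_projDist {I J : Finset ι} (hIJ : Disjoint I J) {x y : V}
    (hx : x ∈ ⨆ i ∈ I, E i) (hx0 : x ≠ 0) (hy : y ∈ ⨆ j ∈ J, E j) (hy0 : y ≠ 0) :
    kappa E ≤ projDist x y := by
  have hI : I.Nonempty := Finset.nonempty_iff_ne_empty.2 (by rintro rfl; simp_all)
  have hJ : J.Nonempty := Finset.nonempty_iff_ne_empty.2 (by rintro rfl; simp_all)
  refine csInf_le ⟨0, ?_⟩ ⟨I, J, x, y, hI, hJ, hIJ, hx, hx0, hy, hy0, rfl⟩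
  rintro _ ⟨I, J, x, y, -, -, -, -, -, -, -, rfl⟩
  exact projDist_nonneg x y

end kappa

lemma Vlow_eq_iSup_filter {s : ℕ} (E : Fin (s+1) → Submodule ℝ V) (i : ℕ) :
    Vlow E i = ⨆ k ∈ Finset.univ.filter (fun k : Fin (s+1) ↦ i < k), E k := by
  simp [Vlow]

theorem stmt18_general [FiniteDimensional ℝ V]
    (s : ℕ) (E : Fin (s+1) → Submodule ℝ V)
    (u₀ : V) (hu₀ : u₀ ∈ E 0) (hu₀n : ‖u₀‖ = 1)
    (j : ℕ) :
    kappa E / 2 ≤ ‖(Submodule.orthogonalProjection (Vlow E j)ᗮ u₀ : V)‖ := by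
  set y := (Vlow E j).starProjection u₀
  have hκy : kappa E ≤ projDist u₀ y := by
    rcases eq_or_ne y 0 with hy0 | hy0
    · rw [hy0, projDist_zero_right]
      exact kappa_le_one E
    · have hu₀I : u₀ ∈ ⨆ i ∈ ({0} : Finset (Fin (s+1))), E i := by simpa using hu₀
      have hyJ : y ∈ ⨆ k ∈ Finset.univ.filter (fun k : Fin (s+1) ↦ j < k), E k :=
        Vlow_eq_iSup_filter E j ▸ (Vlow E j).starProjection_apply_mem u₀
      refine kappa_le_projDist ?_ hu₀I (by rintro rfl; simp at hu₀n) hyJ hy0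
      simp
  calc kappa E / 2 ≤ kappa E := half_le_self (kappa_nonneg E)
    _ ≤ projDist u₀ y := hκy
    _ = _ := projDist_starProjection _ hu₀n

/-- an estimate from the proof of Proposition 4.3 of the paper. For a
splitting `V = E₀ ⊕ ⋯ ⊕ E_s` with `dim E₀ = 1`, a unit vector `u₀ ∈ E₀` and `1 ≤ j ≤ s`:
`|P_{(Vʲ)^⊥} u₀| ≥ κ/2`. -/
theorem stmt18 [FiniteDimensional ℝ V] (hdim : 2 ≤ Module.finrank ℝ V)
    (s : ℕ) (hs : 1 ≤ s) (E : Fin (s+1) → Submodule ℝ V)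
    (hE : DirectSum.IsInternal E) (hEne : ∀ k, E k ≠ ⊥)
    (hE0 : Module.finrank ℝ (E 0) = 1)
    (u₀ : V) (hu₀ : u₀ ∈ E 0) (hu₀n : ‖u₀‖ = 1)
    (j : ℕ) (hj1 : 1 ≤ j) (hj2 : j ≤ s) :
    kappa E / 2 ≤ ‖(Submodule.orthogonalProjection (Vlow E j)ᗮ u₀ : V)‖ :=
  stmt18_general s E u₀ hu₀ hu₀n j
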